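/- arXiv:2405.15482 — 5 statements merged into one kernel-verified Lean document; each statement's English description precedes it below -/
import Mathlib

section
/- Let u : ℝ → ℝ^m and y : ℝ → ℝ^p be (L+1)-times differentiable and α : ℝ → ℝ^{M+1} be differentiable. Define f_i(t) := H(u^{(i)})(t) α(t) and g_i(t) := H(y^{(i)})(t) α(t) for i = 0,...,L. If for every i = 0,...,L-1 one has H(u^{(i)}) α^{(1)} = 0 and H(y^{(i)}) α^{(1)} = 0 identically, then f_i = f_0^{(i)} and g_i = g_0^{(i)} for all i = 0,...,L, i.e., the stacked vector (f_0,...,f_L,g_0,...,g_L) is the L-jet of the pair (f_0, g_0). -/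
open Matrix

/-- `Hmat T M w t` is the `q × (M+1)` matrix whose `j`-th column is `w (t + j T)`. -/
noncomputable def Hmat {q : ℕ} (T : ℝ) (M : ℕ) (w : ℝ → Fin q → ℝ) (t : ℝ) :
    Matrix (Fin q) (Fin (M + 1)) ℝ :=
  fun i j => w (t + (j : ℕ) * T) i

lemma jet_structure_key {q M L : ℕ} (T : ℝ) (w : ℝ → Fin q → ℝ)
    (α : ℝ → Fin (M + 1) → ℝ)
    (hw : ContDiff ℝ (L + 1 : ℕ) w) (hα : Differentiable ℝ α)
    (f : ℕ → ℝ → Fin q → ℝ)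
    (hf : ∀ i, f i = fun t => Hmat T M (iteratedDeriv i w) t *ᵥ α t)
    (hk : ∀ i < L, ∀ t : ℝ, Hmat T M (iteratedDeriv i w) t *ᵥ deriv α t = 0) :
    ∀ i ≤ L, f i = iteratedDeriv i (f 0) := by
  have hdiff : ∀ i : ℕ, i ≤ L → ∀ s : ℝ,
      HasDerivAt (iteratedDeriv i w) (iteratedDeriv (i + 1) w s) s := by
    intro i hi s
    rw [iteratedDeriv_succ]
    exact ((hw.differentiable_iteratedDeriv i
      (by exact_mod_cast Nat.lt_succ_of_le hi)) s).hasDerivAt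
  have hd : ∀ i, i < L → ∀ t : ℝ, HasDerivAt (f i) (f (i + 1) t) t := by
    intro i hi t
    rw [hasDerivAt_pi]
    intro k
    have hterm : ∀ j : Fin (M + 1),
        HasDerivAt (fun s : ℝ => iteratedDeriv i w (s + (j : ℕ) * T) k * α s j)
          (iteratedDeriv (i + 1) w (t + (j : ℕ) * T) k * α t j
            + iteratedDeriv i w (t + (j : ℕ) * T) k * deriv α t j) t := by
      intro j
      have h1 : HasDerivAt (fun s : ℝ => iteratedDeriv i w (s + (j : ℕ) * T))
          (iteratedDeriv (i + 1) w (t + (j : ℕ) * T)) t := by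
        have := (hdiff i hi.le (t + (j : ℕ) * T)).scomp t
          ((hasDerivAt_id t).add_const ((j : ℕ) * T))
        simpa [Function.comp_def] using this
      have h1k := hasDerivAt_pi.mp h1 k
      have h2 : HasDerivAt (fun s : ℝ => α s j) (deriv α t j) t :=
        hasDerivAt_pi.mp ((hα t).hasDerivAt) j
      exact h1k.mul h2
    have hsum := HasDerivAt.fun_sum (fun j (_ : j ∈ Finset.univ) => hterm j)
    have heq1 : (fun s : ℝ => ∑ j : Fin (M + 1),
        iteratedDeriv i w (s + (j : ℕ) * T) k * α s j)
        = fun s : ℝ => f i s k := by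
      funext s
      simp [hf, Hmat, Matrix.mulVec, dotProduct]
    rw [heq1] at hsum
    have hval : (∑ j : Fin (M + 1),
        (iteratedDeriv (i + 1) w (t + (j : ℕ) * T) k * α t j
          + iteratedDeriv i w (t + (j : ℕ) * T) k * deriv α t j))
        = f (i + 1) t k := by
      rw [Finset.sum_add_distrib]
      have hz : (∑ j : Fin (M + 1),
          iteratedDeriv i w (t + (j : ℕ) * T) k * deriv α t j) = 0 := by
        have := congrFun (hk i hi t) k
        simpa [Hmat, Matrix.mulVec, dotProduct] using this
      rw [hz, add_zero]
      simp [hf, Hmat, Matrix.mulVec, dotProduct]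
    rw [hval] at hsum
    exact hsum
  intro i
  induction i with
  | zero => intro _; simp [iteratedDeriv_zero]
  | succ n ih =>
    intro hiL
    have hnL : n < L := hiL
    rw [iteratedDeriv_succ, ← ih (Nat.le_of_succ_le hiL)]
    funext t
    exact ((hd n hnL t).deriv).symm

/-- the kernel conditions imply that `(f_0,…,f_L,g_0,…,g_L)` is the
`L`-jet of `(f_0, g_0)`. -/
theorem jet_structure {m p M L : ℕ} (T : ℝ) (u : ℝ → Fin m → ℝ) (y : ℝ → Fin p → ℝ)
    (α : ℝ → Fin (M + 1) → ℝ)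
    (hu : ContDiff ℝ (L + 1 : ℕ) u) (hy : ContDiff ℝ (L + 1 : ℕ) y)
    (hα : Differentiable ℝ α)
    (f g : ℕ → ℝ → _)
    (hf : ∀ i, f i = fun t => Hmat T M (iteratedDeriv i u) t *ᵥ α t)
    (hg : ∀ i, g i = fun t => Hmat T M (iteratedDeriv i y) t *ᵥ α t)
    (hku : ∀ i < L, ∀ t : ℝ, Hmat T M (iteratedDeriv i u) t *ᵥ deriv α t = 0)
    (hky : ∀ i < L, ∀ t : ℝ, Hmat T M (iteratedDeriv i y) t *ᵥ deriv α t = 0) :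
    (∀ i ≤ L, f i = iteratedDeriv i (f 0)) ∧ (∀ i ≤ L, g i = iteratedDeriv i (g 0)) := by
  exact ⟨jet_structure_key T u α hu hα f hf hku, jet_structure_key T y α hy hα g hg hky⟩
end

section
/- Let 𝔅 be the kernel behavior of Σ_{i=0}^L (P_i u^{(i)} + Q_i y^{(i)}) = 0. Suppose u, y are (L+1)-times differentiable signals, (u,y) ∈ 𝔅, and α : ℝ → ℝ^{M+1} is continuously differentiable with H(u^{(i)}) α^{(1)} = 0 and H(y^{(i)}) α^{(1)} = 0 for i = 0,...,L-1. Then the pair (f₀, g₀) := (H(u)α, H(y)α) satisfies the defining equations of 𝔅, i.e., (f₀, g₀) ∈ 𝔅, and the stacked function (H(u)α, ..., H(u^{(L)})α, H(y)α, ..., H(y^{(L)})α) equals the L-jet J_L(f₀, g₀). -/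
open Matrix

lemma Hmat_mulVec {q : ℕ} (T : ℝ) (M : ℕ) (w : ℝ → Fin q → ℝ) (t : ℝ)
    (v : Fin (M + 1) → ℝ) :
    Hmat T M w t *ᵥ v = ∑ j : Fin (M + 1), v j • w (t + (j : ℕ) * T) := by
  funext i
  simp [Hmat, mulVec, dotProduct, Finset.sum_apply, mul_comm]

lemma key {q : ℕ} (T : ℝ) (M L : ℕ) (w : ℝ → Fin q → ℝ)
    (hw : ContDiff ℝ (L + 1 : ℕ) w) (α : ℝ → Fin (M + 1) → ℝ) (hα : ContDiff ℝ 1 α)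
    (hk : ∀ i < L, ∀ t : ℝ, Hmat T M (iteratedDeriv i w) t *ᵥ deriv α t = 0) :
    ∀ i ≤ L, (fun t => Hmat T M (iteratedDeriv i w) t *ᵥ α t)
      = iteratedDeriv i (fun t => Hmat T M w t *ᵥ α t) := by
  intro i hi
  induction i with
  | zero => simp
  | succ i ih =>
    have hiL : i < L := hi
    conv_rhs => rw [iteratedDeriv_succ, ← ih (le_of_lt hiL)]
    funext t
    have hαd : HasDerivAt α (deriv α t) t :=
      ((hα.differentiable one_ne_zero) t).hasDerivAt
    have hwd : ∀ j : Fin (M + 1),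
        HasDerivAt (fun s => iteratedDeriv i w (s + (j : ℕ) * T))
          (iteratedDeriv (i + 1) w (t + (j : ℕ) * T)) t := by
      intro j
      have h1 : HasDerivAt (iteratedDeriv i w)
          (iteratedDeriv (i + 1) w (t + (j : ℕ) * T)) (t + (j : ℕ) * T) := by
        rw [iteratedDeriv_succ]
        have hlt : (i : WithTop ℕ∞) < ((L + 1 : ℕ) : WithTop ℕ∞) := by
          exact_mod_cast Nat.lt_succ_of_lt hiL
        exact ((hw.differentiable_iteratedDeriv i hlt) _).hasDerivAt
      have h2 : HasDerivAt (fun s : ℝ => s + (j : ℕ) * T) 1 t := by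
        simpa using (hasDerivAt_id t).add_const ((j : ℕ) * T)
      have h3 := h1.scomp t h2
      rw [one_smul] at h3
      exact h3
    have hsum : HasDerivAt (fun s => Hmat T M (iteratedDeriv i w) s *ᵥ α s)
        (Hmat T M (iteratedDeriv i w) t *ᵥ deriv α t
          + Hmat T M (iteratedDeriv (i + 1) w) t *ᵥ α t) t := by
      have : HasDerivAt (fun s => ∑ j : Fin (M + 1),
            α s j • iteratedDeriv i w (s + (j : ℕ) * T))
          (∑ j : Fin (M + 1), (deriv α t j • iteratedDeriv i w (t + (j : ℕ) * T)
            + α t j • iteratedDeriv (i + 1) w (t + (j : ℕ) * T))) t := by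
        apply HasDerivAt.fun_sum
        intro j _
        exact ((hasDerivAt_pi.1 hαd j).smul (hwd j)).congr_deriv (add_comm _ _)
      simp only [Hmat_mulVec]
      rw [← Finset.sum_add_distrib]
      exact this
    rw [hsum.deriv, hk i hiL t, zero_add]

/-- implication 3) ⇒ 1) of Proposition 2 — the generated pair
`(f₀, g₀) = (H(u)α, H(y)α)` belongs to the kernel behavior and the stacked function
is its `L`-jet. -/
theorem generated_trajectory_in_behavior {m p g M L : ℕ} (T : ℝ)
    (P : Fin (L + 1) → Matrix (Fin g) (Fin m) ℝ)
    (Q : Fin (L + 1) → Matrix (Fin g) (Fin p) ℝ)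
    (u : ℝ → Fin m → ℝ) (y : ℝ → Fin p → ℝ)
    (hu : ContDiff ℝ (L + 1 : ℕ) u) (hy : ContDiff ℝ (L + 1 : ℕ) y)
    (hmem : ∀ t : ℝ,
      ∑ i : Fin (L + 1),
        (P i *ᵥ iteratedDeriv (i : ℕ) u t + Q i *ᵥ iteratedDeriv (i : ℕ) y t) = 0)
    (α : ℝ → Fin (M + 1) → ℝ) (hα : ContDiff ℝ 1 α)
    (hku : ∀ i < L, ∀ t : ℝ, Hmat T M (iteratedDeriv i u) t *ᵥ deriv α t = 0)
    (hky : ∀ i < L, ∀ t : ℝ, Hmat T M (iteratedDeriv i y) t *ᵥ deriv α t = 0)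
    (f₀ : ℝ → Fin m → ℝ) (g₀ : ℝ → Fin p → ℝ)
    (hf₀ : f₀ = fun t => Hmat T M u t *ᵥ α t)
    (hg₀ : g₀ = fun t => Hmat T M y t *ᵥ α t) :
    (∀ t : ℝ,
      ∑ i : Fin (L + 1),
        (P i *ᵥ iteratedDeriv (i : ℕ) f₀ t + Q i *ᵥ iteratedDeriv (i : ℕ) g₀ t) = 0) ∧
    (∀ i ≤ L, (fun t => Hmat T M (iteratedDeriv i u) t *ᵥ α t) = iteratedDeriv i f₀) ∧
    (∀ i ≤ L, (fun t => Hmat T M (iteratedDeriv i y) t *ᵥ α t) = iteratedDeriv i g₀) := by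
  subst hf₀ hg₀
  have hU := key T M L u hu α hα hku
  have hY := key T M L y hy α hα hky
  refine ⟨?_, fun i hi => hU i hi, fun i hi => hY i hi⟩
  intro t
  have hfi : ∀ i : Fin (L + 1),
      iteratedDeriv (i : ℕ) (fun t => Hmat T M u t *ᵥ α t) t
        = ∑ j : Fin (M + 1), α t j • iteratedDeriv (i : ℕ) u (t + (j : ℕ) * T) := by
    intro i
    rw [← hU (i : ℕ) (Nat.lt_succ_iff.1 i.isLt)]
    simp only [Hmat_mulVec]
  have hgi : ∀ i : Fin (L + 1),
      iteratedDeriv (i : ℕ) (fun t => Hmat T M y t *ᵥ α t) t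
        = ∑ j : Fin (M + 1), α t j • iteratedDeriv (i : ℕ) y (t + (j : ℕ) * T) := by
    intro i
    rw [← hY (i : ℕ) (Nat.lt_succ_iff.1 i.isLt)]
    simp only [Hmat_mulVec]
  simp only [hfi, hgi]
  have hPQ : ∀ (i : Fin (L + 1)),
      (P i *ᵥ ∑ j : Fin (M + 1), α t j • iteratedDeriv (i : ℕ) u (t + (j : ℕ) * T))
        + (Q i *ᵥ ∑ j : Fin (M + 1), α t j • iteratedDeriv (i : ℕ) y (t + (j : ℕ) * T))
      = ∑ j : Fin (M + 1), α t j •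
          (P i *ᵥ iteratedDeriv (i : ℕ) u (t + (j : ℕ) * T)
            + Q i *ᵥ iteratedDeriv (i : ℕ) y (t + (j : ℕ) * T)) := by
    intro i
    rw [← Matrix.mulVecLin_apply (P i), map_sum, ← Matrix.mulVecLin_apply (Q i), map_sum]
    simp [Matrix.mulVecLin_apply, Matrix.mulVec_smul, smul_add, Finset.sum_add_distrib]
  simp only [hPQ]
  rw [Finset.sum_comm]
  simp only [← Finset.smul_sum, hmem, smul_zero, Finset.sum_const_zero]
end

section
/- Let u : ℝ → ℝ^m, y : ℝ → ℝ^p be (L+1)-times differentiable and α : ℝ → ℝ^{M+1} continuously differentiable. The following are equivalent: (a) for i = 0,...,L-1, d/dt(H(u^{(i)})α) = H(u^{(i+1)})α and d/dt(H(y^{(i)})α) = H(y^{(i+1)})α; (b) for i = 0,...,L-1, H(u^{(i)})α^{(1)} = 0 and H(y^{(i)})α^{(1)} = 0. -/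
open Matrix

lemma hasDerivAt_Hmat_mulVec {q M L : ℕ} (T : ℝ) (w : ℝ → Fin q → ℝ)
    (α : ℝ → Fin (M + 1) → ℝ)
    (hw : ContDiff ℝ (L + 1 : ℕ) w) (hα : ContDiff ℝ 1 α) {i : ℕ} (hi : i < L) (t : ℝ) :
    HasDerivAt (fun s => Hmat T M (iteratedDeriv i w) s *ᵥ α s)
      (Hmat T M (iteratedDeriv (i + 1) w) t *ᵥ α t
        + Hmat T M (iteratedDeriv i w) t *ᵥ deriv α t) t := by
  have hw' : Differentiable ℝ (iteratedDeriv i w) :=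
    hw.differentiable_iteratedDeriv i (by exact_mod_cast Nat.lt_succ_of_lt hi)
  have hα' : Differentiable ℝ α := hα.differentiable one_ne_zero
  rw [hasDerivAt_pi]
  intro k
  simp only [Hmat, mulVec, dotProduct, Pi.add_apply]
  rw [← Finset.sum_add_distrib]
  apply HasDerivAt.fun_sum
  intro j _
  have h1 : HasDerivAt (fun s : ℝ => iteratedDeriv i w (s + (j:ℕ) * T))
      (iteratedDeriv (i + 1) w (t + (j:ℕ) * T)) t := by
    have h := (hw' (t + (j:ℕ) * T)).hasDerivAt
    rw [iteratedDeriv_succ]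
    have := (h.scomp t ((hasDerivAt_id t).add_const ((j:ℕ) * T)))
    simpa [Function.comp_def] using this
  have h1k : HasDerivAt (fun s : ℝ => iteratedDeriv i w (s + (j:ℕ) * T) k)
      (iteratedDeriv (i + 1) w (t + (j:ℕ) * T) k) t := hasDerivAt_pi.mp h1 k
  have h2 : HasDerivAt (fun s : ℝ => α s j) (deriv α t j) t :=
    hasDerivAt_pi.mp (hα' t).hasDerivAt j
  exact h1k.mul h2

/-- equivalence 2) ⇔ 3) of Proposition 2. -/
theorem prop2_two_iff_three {m p M L : ℕ} (T : ℝ)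
    (u : ℝ → Fin m → ℝ) (y : ℝ → Fin p → ℝ) (α : ℝ → Fin (M + 1) → ℝ)
    (hu : ContDiff ℝ (L + 1 : ℕ) u) (hy : ContDiff ℝ (L + 1 : ℕ) y)
    (hα : ContDiff ℝ 1 α) :
    ((∀ i < L, ∀ t : ℝ,
        deriv (fun s => Hmat T M (iteratedDeriv i u) s *ᵥ α s) t
          = Hmat T M (iteratedDeriv (i + 1) u) t *ᵥ α t) ∧
     (∀ i < L, ∀ t : ℝ,
        deriv (fun s => Hmat T M (iteratedDeriv i y) s *ᵥ α s) t
          = Hmat T M (iteratedDeriv (i + 1) y) t *ᵥ α t))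
      ↔ ((∀ i < L, ∀ t : ℝ, Hmat T M (iteratedDeriv i u) t *ᵥ deriv α t = 0) ∧
         (∀ i < L, ∀ t : ℝ, Hmat T M (iteratedDeriv i y) t *ᵥ deriv α t = 0)) := by
  have key : ∀ {q : ℕ} (w : ℝ → Fin q → ℝ), ContDiff ℝ (L + 1 : ℕ) w →
      ((∀ i < L, ∀ t : ℝ,
        deriv (fun s => Hmat T M (iteratedDeriv i w) s *ᵥ α s) t
          = Hmat T M (iteratedDeriv (i + 1) w) t *ᵥ α t) ↔
       (∀ i < L, ∀ t : ℝ, Hmat T M (iteratedDeriv i w) t *ᵥ deriv α t = 0)) := by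
    intro q w hw
    constructor
    · intro h i hi t
      have hd := (hasDerivAt_Hmat_mulVec T w α hw hα hi t).deriv
      have := h i hi t
      rw [hd] at this
      exact add_eq_left.mp this
    · intro h i hi t
      have hd := (hasDerivAt_Hmat_mulVec T w α hw hα hi t).deriv
      rw [hd, h i hi t, add_zero]
  rw [key u hu, key y hy]
end

section
/- Let A ∈ ℝ^{n×n}, B ∈ ℝ^{n×m}, and let (u, x) satisfy x' = Ax + Bu with u differentiable. Let α : ℝ → ℝ^{M+1} be continuously differentiable and suppose H(u) α^{(1)} = 0 and H(x) α^{(1)} = 0 identically. Then the pair (ū, x̄) := (H(u)α, H(x)α) also satisfies x̄' = A x̄ + B ū. -/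
open Matrix

lemma shift_hasDerivAt {q : ℕ} (w : ℝ → Fin q → ℝ) (hw : Differentiable ℝ w)
    (c : ℝ) (t : ℝ) (i : Fin q) :
    HasDerivAt (fun s => w (s + c) i) (deriv w (t + c) i) t := by
  have h1 : HasDerivAt w (deriv w (t + c)) (t + c) := (hw (t + c)).hasDerivAt
  have h2 : HasDerivAt (fun s => w s i) (deriv w (t + c) i) (t + c) :=
    (hasDerivAt_pi.mp h1) i
  have h3 : HasDerivAt (fun s : ℝ => s + c) 1 t := by
    simpa using (hasDerivAt_id t).add_const c
  have h4 := h2.comp t h3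
  rw [mul_one] at h4
  exact h4

/-- the generated input-state pair `(H(u)α, H(x)α)` satisfies the
same state equation `x' = Ax + Bu`. -/
theorem generated_state_trajectory {n m M : ℕ} (T : ℝ)
    (A : Matrix (Fin n) (Fin n) ℝ) (B : Matrix (Fin n) (Fin m) ℝ)
    (u : ℝ → Fin m → ℝ) (x : ℝ → Fin n → ℝ)
    (hu : Differentiable ℝ u) (hx : Differentiable ℝ x)
    (hstate : ∀ t : ℝ, deriv x t = A *ᵥ x t + B *ᵥ u t)
    (α : ℝ → Fin (M + 1) → ℝ) (hα : ContDiff ℝ 1 α)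
    (hku : ∀ t : ℝ, Hmat T M u t *ᵥ deriv α t = 0)
    (hkx : ∀ t : ℝ, Hmat T M x t *ᵥ deriv α t = 0)
    (ubar : ℝ → Fin m → ℝ) (xbar : ℝ → Fin n → ℝ)
    (hub : ubar = fun t => Hmat T M u t *ᵥ α t)
    (hxb : xbar = fun t => Hmat T M x t *ᵥ α t) :
    ∀ t : ℝ, deriv xbar t = A *ᵥ xbar t + B *ᵥ ubar t := by
  intro t
  have hαd : Differentiable ℝ α := hα.differentiable one_ne_zero
  have hαj : ∀ (s : ℝ) (j : Fin (M + 1)),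
      HasDerivAt (fun s => α s j) (deriv α s j) s := fun s j =>
    (hasDerivAt_pi.mp (hαd s).hasDerivAt) j
  have key : HasDerivAt xbar (A *ᵥ xbar t + B *ᵥ ubar t) t := by
    rw [hasDerivAt_pi]
    intro i
    -- componentwise
    have hcomp : ∀ s, xbar s i = ∑ j : Fin (M + 1), x (s + (j : ℕ) * T) i * α s j := by
      intro s; simp [hxb, Hmat, mulVec, dotProduct]
    have hderiv : HasDerivAt (fun s => ∑ j : Fin (M + 1), x (s + (j : ℕ) * T) i * α s j)
        (∑ j : Fin (M + 1), (deriv x (t + (j : ℕ) * T) i * α t j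
          + x (t + (j : ℕ) * T) i * deriv α t j)) t := by
      apply HasDerivAt.fun_sum
      intro j _
      exact (shift_hasDerivAt x hx ((j : ℕ) * T) t i).mul (hαj t j)
    have heq : (∑ j : Fin (M + 1), (deriv x (t + (j : ℕ) * T) i * α t j
          + x (t + (j : ℕ) * T) i * deriv α t j))
        = (A *ᵥ xbar t + B *ᵥ ubar t) i := by
      rw [Finset.sum_add_distrib]
      have h2 : (∑ j : Fin (M + 1), x (t + (j : ℕ) * T) i * deriv α t j) = 0 := by
        have := congrFun (hkx t) i
        simpa [Hmat, mulVec, dotProduct] using this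
      rw [h2, add_zero]
      have h1 : ∀ j : Fin (M + 1), deriv x (t + (j : ℕ) * T) i
          = (A *ᵥ x (t + (j : ℕ) * T)) i + (B *ᵥ u (t + (j : ℕ) * T)) i := by
        intro j; rw [hstate]; rfl
      simp only [h1, add_mul, Finset.sum_add_distrib]
      simp only [hxb, hub, Hmat, mulVec, dotProduct, Pi.add_apply, Finset.mul_sum,
        Finset.sum_mul, mul_assoc]
      rw [Finset.sum_comm (γ := Fin n), Finset.sum_comm (γ := Fin m)]
    have : HasDerivAt (fun s => xbar s i)
        (∑ j : Fin (M + 1), (deriv x (t + (j : ℕ) * T) i * α t j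
          + x (t + (j : ℕ) * T) i * deriv α t j)) t := by
      simpa only [← hcomp] using hderiv
    rw [heq] at this
    exact this
  exact key.deriv
end

section
/- Let u, y be (L+2)-times differentiable signals and let α : ℝ → ℝ^{M+1} be a differentiable solution of the implicit ODE system: H(u^{(i)}) α^{(1)} = 0 for i = 0,...,L-1, H(y^{(i)}) α^{(1)} = 0 for i = 0,...,L-1, and H(u^{(L)}) α^{(1)} = ū^{(L+1)} − H(u^{(L+1)}) α, where ū is a given (L+1)-times differentiable input. If additionally H(u^{(L)})(0) α(0) = ū^{(L)}(0), then H(u^{(L)})(t) α(t) = ū^{(L)}(t) for all t. -/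
open Matrix

/-- input-matching step of the data-driven simulation problem
(Proposition 4): a solution of the implicit ODE matches `ū⁽ᴸ⁾` for all time. -/
theorem input_matching {m p M L : ℕ} (T : ℝ)
    (u : ℝ → Fin m → ℝ) (y : ℝ → Fin p → ℝ)
    (hu : ContDiff ℝ (L + 2 : ℕ) u) (hy : ContDiff ℝ (L + 2 : ℕ) y)
    (ubar : ℝ → Fin m → ℝ) (hub : ContDiff ℝ (L + 1 : ℕ) ubar)
    (α : ℝ → Fin (M + 1) → ℝ) (hα : Differentiable ℝ α)
    (hku : ∀ i < L, ∀ t : ℝ, Hmat T M (iteratedDeriv i u) t *ᵥ deriv α t = 0)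
    (hky : ∀ i < L, ∀ t : ℝ, Hmat T M (iteratedDeriv i y) t *ᵥ deriv α t = 0)
    (hLast : ∀ t : ℝ,
      Hmat T M (iteratedDeriv L u) t *ᵥ deriv α t
        = iteratedDeriv (L + 1) ubar t - Hmat T M (iteratedDeriv (L + 1) u) t *ᵥ α t)
    (hinit : Hmat T M (iteratedDeriv L u) 0 *ᵥ α 0 = iteratedDeriv L ubar 0) :
    ∀ t : ℝ, Hmat T M (iteratedDeriv L u) t *ᵥ α t = iteratedDeriv L ubar t := by
  -- the auxiliary function
  set F : ℝ → Fin m → ℝ := fun t =>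
    (∑ j : Fin (M + 1), α t j • iteratedDeriv L u (t + (j : ℕ) * T))
      - iteratedDeriv L ubar t with hF
  -- derivatives of the building blocks
  have huL : ∀ x : ℝ, HasDerivAt (iteratedDeriv L u) (iteratedDeriv (L + 1) u x) x := by
    intro x
    have hd : DifferentiableAt ℝ (iteratedDeriv L u) x :=
      (hu.differentiable_iteratedDeriv L (by exact_mod_cast Nat.lt_add_of_pos_right two_pos)) x
    simpa [iteratedDeriv_succ] using hd.hasDerivAt
  have hubL : ∀ x : ℝ, HasDerivAt (iteratedDeriv L ubar) (iteratedDeriv (L + 1) ubar x) x := by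
    intro x
    have hd : DifferentiableAt ℝ (iteratedDeriv L ubar) x :=
      (hub.differentiable_iteratedDeriv L (by exact_mod_cast Nat.lt_succ_self _)) x
    simpa [iteratedDeriv_succ] using hd.hasDerivAt
  have hFderiv : ∀ t : ℝ, HasDerivAt F 0 t := by
    intro t
    have hsum : HasDerivAt
        (fun s => ∑ j : Fin (M + 1), α s j • iteratedDeriv L u (s + (j : ℕ) * T))
        (∑ j : Fin (M + 1),
          (α t j • iteratedDeriv (L + 1) u (t + (j : ℕ) * T)
            + deriv α t j • iteratedDeriv L u (t + (j : ℕ) * T))) t := by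
      apply HasDerivAt.fun_sum
      intro j _
      have hαj : HasDerivAt (fun s => α s j) (deriv α t j) t :=
        (hasDerivAt_pi.mp (hα t).hasDerivAt) j
      have hshift : HasDerivAt (fun s : ℝ => s + (j : ℕ) * T) 1 t :=
        (hasDerivAt_id t).add_const _
      have hcomp : HasDerivAt (fun s => iteratedDeriv L u (s + (j : ℕ) * T))
          (iteratedDeriv (L + 1) u (t + (j : ℕ) * T)) t := by
        have h2 := (huL (t + (j : ℕ) * T)).scomp t hshift
        simp only [one_smul] at h2
        exact h2
      exact hαj.smul hcomp
    have := hsum.sub (hubL t)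
    refine HasDerivAt.congr_deriv this ?_
    have h := congrFun (hLast t)
    have hsum0 : ∀ i : Fin m,
        (∑ j : Fin (M + 1),
          (α t j • iteratedDeriv (L + 1) u (t + (j : ℕ) * T)
            + deriv α t j • iteratedDeriv L u (t + (j : ℕ) * T))) i
          - iteratedDeriv (L + 1) ubar t i = 0 := by
      intro i
      have h1 := congrFun (hLast t) i
      rw [Hmat_mulVec, Hmat_mulVec] at h1
      simp only [Finset.sum_apply, Pi.add_apply, Pi.smul_apply, Pi.sub_apply,
        smul_eq_mul] at h1 ⊢
      rw [Finset.sum_add_distrib]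
      linarith
    funext i
    simpa using (hsum0 i)
  -- F is constant, equal to F 0 = 0
  have hFdiff : Differentiable ℝ F := fun x => (hFderiv x).differentiableAt
  have hfd0 : ∀ x : ℝ, fderiv ℝ F x = 0 := by
    intro x
    rw [(hFderiv x).hasFDerivAt.fderiv]
    ext v
    simp
  have hconst : ∀ t : ℝ, F t = F 0 := fun t =>
    is_const_of_fderiv_eq_zero hFdiff hfd0 t 0
  have hF0 : F 0 = 0 := by
    have h0 := hinit
    rw [Hmat_mulVec] at h0
    simp only [zero_add] at h0
    simp only [hF]
    rw [sub_eq_zero]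
    simpa using h0
  intro t
  have hFt : F t = 0 := (hconst t).trans hF0
  rw [Hmat_mulVec]
  exact sub_eq_zero.mp (by simpa [hF] using hFt)
end
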